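/- Let k be a field of characteristic p > 0, m ≥ 0, m' = p^m − 1, and let K = k(t), K' = k(t^{p^m}). Define K'-linear maps ∂ⱼ on K by ∂ⱼ(tⁱ) = C(i,j) t^{i−j} on the basis 1, t, ..., t^{m'} of K over K' (binomial coefficient, zero if j > i). Then (∂₀,...,∂_{m'}) is a higher derivation on K and its field of constants is exactly K' = k(t^{p^m}). -/

import Mathlib

open Finset Polynomial

private lemma shdc_lucas (k : Type*) [Field k] (p : ℕ) [Fact p.Prime] [CharP k p]
    (m : ℕ) {s t : ℕ} (ht : t < p ^ m) :
    (((p ^ m + s).choose t : ℕ) : RatFunc k) = ((s.choose t : ℕ) : RatFunc k) := by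
  haveI : CharP (RatFunc k) p :=
    charP_of_injective_algebraMap (algebraMap k (RatFunc k)).injective p
  have hz : (((p ^ m + s).choose t : ℕ) : ZMod p) = ((s.choose t : ℕ) : ZMod p) := by
    calc (((p ^ m + s).choose t : ℕ) : ZMod p)
        = ((Polynomial.X + 1 : Polynomial (ZMod p)) ^ (p ^ m + s)).coeff t := by
          rw [Polynomial.coeff_X_add_one_pow]
      _ = ((Polynomial.X ^ (p ^ m) + 1) * (Polynomial.X + 1) ^ s
            : Polynomial (ZMod p)).coeff t := by
          rw [pow_add, add_pow_char_pow, one_pow]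
      _ = ((s.choose t : ℕ) : ZMod p) := by
          rw [add_mul, one_mul, Polynomial.coeff_add, Polynomial.X_pow_mul,
            Polynomial.coeff_mul_X_pow', if_neg (by omega), zero_add,
            Polynomial.coeff_X_add_one_pow]
  exact CharP.natCast_eq_natCast' (RatFunc k) p ((ZMod.natCast_eq_natCast_iff _ _ _).mp hz)

set_option linter.unusedTactic false in
private lemma shdc_span (k : Type*) [Field k] (p : ℕ) [Fact p.Prime] [CharP k p]
    (m : ℕ) (K' : Subfield (RatFunc k)) (hC : ∀ c : k, RatFunc.C c ∈ K')
    (hXq : (RatFunc.X : RatFunc k) ^ (p ^ m) ∈ K') (a : RatFunc k) :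
    ∃ c : ℕ → RatFunc k, (∀ i, c i ∈ K') ∧
      a = ∑ i ∈ Finset.range (p ^ m), c i * (RatFunc.X : RatFunc k) ^ i := by
  classical
  set q := p ^ m with hq
  have hq1 : 1 ≤ q := Nat.one_le_pow _ _ (Fact.out : p.Prime).pos
  -- q-th powers of polynomials land in K'
  have hpolyq : ∀ g : Polynomial k, algebraMap (Polynomial k) (RatFunc k) (g ^ q) ∈ K' := by
    intro g
    induction g using Polynomial.induction_on' with
    | add u v hu hv =>
        rw [hq, add_pow_char_pow, map_add]
        exact add_mem hu hv
    | monomial n b =>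
        have heq : algebraMap (Polynomial k) (RatFunc k) ((Polynomial.monomial n b) ^ q)
            = RatFunc.C (b ^ q) * ((RatFunc.X : RatFunc k) ^ q) ^ n := by
          rw [Polynomial.monomial_pow, ← Polynomial.C_mul_X_pow_eq_monomial, map_mul,
            RatFunc.algebraMap_C]
          congr 1
          rw [map_pow, RatFunc.algebraMap_X, mul_comm n q, pow_mul]
        rw [heq]
        exact mul_mem (hC _) (pow_mem hXq n)
  -- polynomials lie in the span
  have hpoly : ∀ f : Polynomial k, ∃ c : ℕ → RatFunc k, (∀ i, c i ∈ K') ∧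
      algebraMap (Polynomial k) (RatFunc k) f
        = ∑ i ∈ Finset.range q, c i * (RatFunc.X : RatFunc k) ^ i := by
    intro f
    induction f using Polynomial.induction_on' with
    | add u v hu hv =>
        obtain ⟨c1, hc1, h1⟩ := hu
        obtain ⟨c2, hc2, h2⟩ := hv
        refine ⟨fun i => c1 i + c2 i, fun i => add_mem (hc1 i) (hc2 i), ?_⟩
        rw [map_add, h1, h2, ← Finset.sum_add_distrib]
        exact Finset.sum_congr rfl fun i _ => by ring
    | monomial n b =>
        refine ⟨fun i => if i = n % q then
            RatFunc.C b * ((RatFunc.X : RatFunc k) ^ q) ^ (n / q) else 0, fun i => ?_, ?_⟩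
        · dsimp only
          split
          · exact mul_mem (hC _) (pow_mem hXq _)
          · exact zero_mem _
        · beta_reduce
          rw [Finset.sum_eq_single (n % q)
            (fun i _ hi => by simp [hi])
            (fun h => absurd (Finset.mem_range.mpr (Nat.mod_lt _ (by omega))) h), if_pos rfl]
          rw [← Polynomial.C_mul_X_pow_eq_monomial, map_mul, map_pow, RatFunc.algebraMap_C,
            RatFunc.algebraMap_X]
          rw [mul_assoc, ← pow_mul, ← pow_add, Nat.div_add_mod]
  -- general rational functions
  induction a using RatFunc.induction_on with
  | f f g hg =>
    obtain ⟨c, hc, hsum⟩ := hpoly (f * g ^ (q - 1))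
    have hgne : algebraMap (Polynomial k) (RatFunc k) g ≠ 0 := RatFunc.algebraMap_ne_zero hg
    have hu : (algebraMap (Polynomial k) (RatFunc k) (g ^ q))⁻¹ ∈ K' :=
      Subfield.inv_mem _ (hpolyq g)
    refine ⟨fun i => (algebraMap (Polynomial k) (RatFunc k) (g ^ q))⁻¹ * c i,
      fun i => mul_mem hu (hc i), ?_⟩
    have key : algebraMap (Polynomial k) (RatFunc k) f / algebraMap (Polynomial k) (RatFunc k) g
        = (algebraMap (Polynomial k) (RatFunc k) (g ^ q))⁻¹ *
          algebraMap (Polynomial k) (RatFunc k) (f * g ^ (q - 1)) := by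
      rw [map_mul, map_pow, map_pow]
      rw [div_eq_iff hgne]
      have hgq : (algebraMap (Polynomial k) (RatFunc k) g) ^ q
          = algebraMap (Polynomial k) (RatFunc k) g *
            (algebraMap (Polynomial k) (RatFunc k) g) ^ (q - 1) := by
        rw [← pow_succ', Nat.sub_add_cancel hq1]
      rw [hgq]
      field_simp
    rw [key, hsum, Finset.mul_sum]
    exact Finset.sum_congr rfl fun i _ => by ring

/-- Let `k` be a field of characteristic `p > 0`, `m ≥ 0`, `m' = p^m − 1`,
`K = k(t)` and `K' = k(t^{p^m})`.  The `K'`-linear maps `∂ⱼ` on `K` determined on the basis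
`1, t, …, t^{m'}` by `∂ⱼ(tⁱ) = C(i,j) t^{i−j}` form a higher derivation on `K` whose field of
constants is exactly `K' = k(t^{p^m})`. -/
theorem standard_higher_derivation_constants
    (k : Type*) [Field k] (p : ℕ) [Fact p.Prime] [CharP k p] (m : ℕ)
    (K' : Subfield (RatFunc k))
    (hK' : K' = Subfield.closure (Set.range (RatFunc.C : k →+* RatFunc k) ∪
      {(RatFunc.X : RatFunc k) ^ (p ^ m)}))
    (d : ℕ → RatFunc k →+ RatFunc k)
    (hlin : ∀ j ≤ p ^ m - 1, ∀ x ∈ K', ∀ a : RatFunc k, d j (x * a) = x * d j a)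
    (hbasis : ∀ i ≤ p ^ m - 1, ∀ j ≤ p ^ m - 1,
      d j ((RatFunc.X : RatFunc k) ^ i) =
        (i.choose j : RatFunc k) * (RatFunc.X : RatFunc k) ^ (i - j)) :
    (∀ a : RatFunc k, d 0 a = a) ∧
    (∀ l ≤ p ^ m - 1, ∀ a b : RatFunc k,
      d l (a * b) = ∑ j ∈ Finset.range (l + 1), d j a * d (l - j) b) ∧
    {a : RatFunc k | ∀ j, 1 ≤ j → j ≤ p ^ m - 1 → d j a = 0} = (K' : Set (RatFunc k)) := by
  classical
  have hq1 : 1 ≤ p ^ m := Nat.one_le_pow _ _ (Fact.out : p.Prime).pos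
  have hC : ∀ c : k, RatFunc.C c ∈ K' := fun c => by
    rw [hK']; exact Subfield.subset_closure (Or.inl ⟨c, rfl⟩)
  have hXq : (RatFunc.X : RatFunc k) ^ (p ^ m) ∈ K' := by
    rw [hK']; exact Subfield.subset_closure (Or.inr rfl)
  have hspan := shdc_span k p m K' hC hXq
  -- derivative of elements of K' vanish
  have hd1 : ∀ j, 1 ≤ j → j ≤ p ^ m - 1 → d j (1 : RatFunc k) = 0 := by
    intro j hj1 hj2
    have := hbasis 0 (Nat.zero_le _) j hj2
    rw [pow_zero, Nat.choose_eq_zero_of_lt hj1] at this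
    simpa using this
  have hdK' : ∀ j, 1 ≤ j → j ≤ p ^ m - 1 → ∀ x ∈ K', d j x = 0 := by
    intro j hj1 hj2 x hx
    rw [← mul_one x, hlin j hj2 x hx, hd1 j hj1 hj2, mul_zero]
  -- extended basis computation
  have hdX : ∀ n ≤ 2 * (p ^ m - 1), ∀ l ≤ p ^ m - 1,
      d l ((RatFunc.X : RatFunc k) ^ n)
        = (n.choose l : RatFunc k) * (RatFunc.X : RatFunc k) ^ (n - l) := by
    intro n hn l hl
    by_cases h : n ≤ p ^ m - 1
    · exact hbasis n h l hl
    · have hnq : p ^ m ≤ n := by omega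
      have hXn : (RatFunc.X : RatFunc k) ^ n = RatFunc.X ^ (p ^ m) * RatFunc.X ^ (n - p ^ m) := by
        rw [← pow_add]; congr 1; omega
      have hcast : ((n - p ^ m).choose l : RatFunc k) = (n.choose l : RatFunc k) := by
        conv_rhs => rw [show n = p ^ m + (n - p ^ m) by omega]
        exact (shdc_lucas k p m (by omega)).symm
      rw [hXn, hlin l hl _ hXq, hbasis (n - p ^ m) (by omega) l hl]
      by_cases hl2 : l ≤ n - p ^ m
      · rw [hcast, show n - l = p ^ m + (n - p ^ m - l) by omega, pow_add]; ring
      · rw [← hcast, Nat.choose_eq_zero_of_lt (show n - p ^ m < l by omega)]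
        simp
  refine ⟨?_, ?_, ?_⟩
  · -- d 0 = id
    intro a
    obtain ⟨c, hc, rfl⟩ := hspan a
    rw [map_sum]
    refine Finset.sum_congr rfl fun i hi => ?_
    rw [hlin 0 (Nat.zero_le _) _ (hc i),
      hbasis i (by simp only [Finset.mem_range] at hi; omega) 0 (Nat.zero_le _)]
    simp
  · -- Leibniz
    intro l hl a b
    -- basis case
    have hXX : ∀ i ≤ p ^ m - 1, ∀ i' ≤ p ^ m - 1,
        d l ((RatFunc.X : RatFunc k) ^ i * RatFunc.X ^ i')
          = ∑ j ∈ Finset.range (l + 1), d j (RatFunc.X ^ i : RatFunc k) * d (l - j) (RatFunc.X ^ i') := by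
      intro i hi i' hi'
      rw [← pow_add, hdX (i + i') (by omega) l hl]
      have hterm : ∀ j ∈ Finset.range (l + 1),
          d j ((RatFunc.X : RatFunc k) ^ i) * d (l - j) (RatFunc.X ^ i' : RatFunc k)
            = ((i.choose j * i'.choose (l - j) : ℕ) : RatFunc k)
              * (RatFunc.X : RatFunc k) ^ (i + i' - l) := by
        intro j hj
        have hjl : j ≤ l := by simp only [Finset.mem_range] at hj; omega
        rw [hbasis i hi j (by omega), hbasis i' hi' (l - j) (by omega), Nat.cast_mul]
        by_cases hcc : j ≤ i ∧ l - j ≤ i'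
        · rw [mul_mul_mul_comm, ← pow_add, show i - j + (i' - (l - j)) = i + i' - l by omega]
        · rcases not_and_or.mp hcc with h | h
          · rw [Nat.choose_eq_zero_of_lt (by omega)]; simp
          · rw [Nat.choose_eq_zero_of_lt (show i' < l - j by omega)]; simp
      rw [Finset.sum_congr rfl hterm, ← Finset.sum_mul, ← Nat.cast_sum]
      congr 2
      rw [Nat.add_choose_eq i i' l, Finset.Nat.sum_antidiagonal_eq_sum_range_succ_mk]
    obtain ⟨c, hc, rfl⟩ := hspan a
    obtain ⟨e, he, rfl⟩ := hspan b
    calc d l ((∑ i ∈ Finset.range (p ^ m), c i * (RatFunc.X : RatFunc k) ^ i) *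
          ∑ i' ∈ Finset.range (p ^ m), e i' * (RatFunc.X : RatFunc k) ^ i')
        = ∑ i ∈ Finset.range (p ^ m), ∑ i' ∈ Finset.range (p ^ m),
            c i * e i' * d l ((RatFunc.X : RatFunc k) ^ i * RatFunc.X ^ i') := by
          rw [Finset.sum_mul_sum, map_sum]
          refine Finset.sum_congr rfl fun i _ => ?_
          rw [map_sum]
          refine Finset.sum_congr rfl fun i' _ => ?_
          rw [show c i * (RatFunc.X : RatFunc k) ^ i * (e i' * RatFunc.X ^ i')
              = (c i * e i') * ((RatFunc.X : RatFunc k) ^ i * RatFunc.X ^ i') by ring,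
            hlin l hl _ (mul_mem (hc i) (he i'))]
      _ = ∑ i ∈ Finset.range (p ^ m), ∑ i' ∈ Finset.range (p ^ m),
            ∑ j ∈ Finset.range (l + 1), c i * e i' *
              (d j ((RatFunc.X : RatFunc k) ^ i) * d (l - j) (RatFunc.X ^ i' : RatFunc k)) := by
          refine Finset.sum_congr rfl fun i hi => Finset.sum_congr rfl fun i' hi' => ?_
          simp only [Finset.mem_range] at hi hi'
          rw [hXX i (by omega) i' (by omega), Finset.mul_sum]
      _ = ∑ j ∈ Finset.range (l + 1), ∑ i ∈ Finset.range (p ^ m),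
            ∑ i' ∈ Finset.range (p ^ m), c i * e i' *
              (d j ((RatFunc.X : RatFunc k) ^ i) * d (l - j) (RatFunc.X ^ i' : RatFunc k)) := by
          refine (Finset.sum_congr rfl fun i _ => Finset.sum_comm).trans ?_
          exact Finset.sum_comm
      _ = ∑ j ∈ Finset.range (l + 1),
            d j (∑ i ∈ Finset.range (p ^ m), c i * (RatFunc.X : RatFunc k) ^ i) *
            d (l - j) (∑ i' ∈ Finset.range (p ^ m), e i' * (RatFunc.X : RatFunc k) ^ i') := by
          refine Finset.sum_congr rfl fun j hj => ?_
          have hjl : j ≤ l := by simp only [Finset.mem_range] at hj; omega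
          rw [map_sum, map_sum, Finset.sum_mul_sum]
          refine Finset.sum_congr rfl fun i hi => ?_
          refine Finset.sum_congr rfl fun i' hi' => ?_
          rw [hlin j (by omega) _ (hc i), hlin (l - j) (by omega) _ (he i')]
          ring
  · -- constants
    ext a
    simp only [Set.mem_setOf_eq, SetLike.mem_coe]
    constructor
    · intro ha
      obtain ⟨c, hc, rfl⟩ := hspan a
      have hcz : ∀ n, ∀ i, 1 ≤ i → i ≤ p ^ m - 1 → p ^ m - 1 - i = n → c i = 0 := by
        intro n
        induction n using Nat.strong_induction_on with
        | _ n ih =>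
          intro i h1 h2 h3
          have hdi := ha i h1 h2
          rw [map_sum] at hdi
          rw [Finset.sum_eq_single i (fun i' hi' hne => ?_)
            (fun h => absurd (Finset.mem_range.mpr (by omega)) h)] at hdi
          · rw [hlin i h2 _ (hc i), hbasis i h2 i h2, Nat.choose_self, Nat.sub_self,
              pow_zero] at hdi
            simpa using hdi
          · simp only [Finset.mem_range] at hi'
            rw [hlin i h2 _ (hc i'), hbasis i' (by omega) i h2]
            rcases lt_or_gt_of_ne hne with h | h
            · rw [Nat.choose_eq_zero_of_lt h]; simp
            · rw [ih (p ^ m - 1 - i') (by omega) i' (by omega) (by omega) rfl]; simp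
      rw [Finset.sum_eq_single 0 (fun i hi hne => by
          simp only [Finset.mem_range] at hi
          rw [hcz (p ^ m - 1 - i) i (by omega) (by omega) rfl]; simp)
        (fun h => absurd (Finset.mem_range.mpr (by omega)) h)]
      simpa using hc 0
    · intro ha j hj1 hj2
      exact hdK' j hj1 hj2 a ha
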